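/- arXiv:2012.11574 — 2 statements merged into one kernel-verified Lean document; each statement's English description precedes it below -/
import Mathlib

section
/- Let (x_1, x_2) be the bin counts of a multinomial sample of size N with two equally likely bins (each with probability 1/2). Then E[|x_2 − x_1|] = 2^{−N+1} · ⌊(N+1)/2⌋ · C(N, ⌊N/2⌋). -/
open Finset

/-- Expectation of `f` of the bin counts of a multinomial sample of size `N`
with bin probabilities `p : Fin n → ℝ`. -/
noncomputable def multExp (n N : ℕ) (p : Fin n → ℝ) (f : (Fin n → ℕ) → ℝ) : ℝ :=
  ∑ x ∈ (Fintype.piFinset fun _ : Fin n => Finset.range (N + 1)).filter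
      (fun x => ∑ i, x i = N),
    (Nat.multinomial Finset.univ x : ℝ) * (∏ i, p i ^ x i) * f x


lemma key_step (N m : ℕ) : ((m : ℤ) + 1) * N.choose (m + 1) = ((N : ℤ) - m) * N.choose m := by
  rcases le_or_gt (m + 1) N with h | h
  · have hc : ((N.choose (m+1) * (m+1) : ℕ) : ℤ) = ((N.choose m * (N - m) : ℕ) : ℤ) :=
      congrArg _ (Nat.choose_succ_right_eq N m)
    push_cast [Nat.cast_sub (le_of_lt (Nat.lt_of_succ_le h))] at hc
    linarith
  · rw [Nat.choose_eq_zero_of_lt h]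
    rcases eq_or_lt_of_le (Nat.lt_succ_iff.mp h) with h2 | h2
    · rw [← h2]; ring
    · rw [Nat.choose_eq_zero_of_lt h2]; ring

lemma tele (N : ℕ) (m : ℕ) :
    ∑ k ∈ Finset.range m, ((N : ℤ) - 2 * k) * N.choose k = (m : ℤ) * N.choose m := by
  induction m with
  | zero => simp
  | succ m ih =>
    rw [Finset.sum_range_succ, ih]
    have := key_step N m
    push_cast
    linarith

lemma abs_sum (N : ℕ) :
    ∑ k ∈ Finset.range (N + 1), (N.choose k : ℤ) * |(N : ℤ) - 2 * k| =
      2 * ((N : ℤ) - (N / 2 : ℕ)) * N.choose (N / 2) := by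
  set h := N / 2 with hh
  have hhle : h ≤ N := Nat.div_le_self N 2
  have hsplit : ∑ k ∈ Finset.range (N + 1), (N.choose k : ℤ) * |(N : ℤ) - 2 * k| =
      (∑ k ∈ Finset.range (h + 1), (N.choose k : ℤ) * |(N : ℤ) - 2 * k|) +
      ∑ k ∈ Finset.Ico (h + 1) (N + 1), (N.choose k : ℤ) * |(N : ℤ) - 2 * k| := by
    simp only [Finset.range_eq_Ico]
    exact (Finset.sum_Ico_consecutive _ (by omega) (by omega)).symm
  have h1 : (∑ k ∈ Finset.range (h + 1), (N.choose k : ℤ) * |(N : ℤ) - 2 * k|) =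
      ((h : ℤ) + 1) * N.choose (h + 1) := by
    have t1 := tele N (h + 1)
    push_cast at t1
    rw [← t1]
    refine Finset.sum_congr rfl fun k hk => ?_
    rw [Finset.mem_range] at hk
    rw [abs_of_nonneg (by omega : (0:ℤ) ≤ (N : ℤ) - 2 * k)]
    ring
  have h2 : (∑ k ∈ Finset.Ico (h + 1) (N + 1), (N.choose k : ℤ) * |(N : ℤ) - 2 * k|) =
      ((N : ℤ) - h) * N.choose (N - h) := by
    have t2 := tele N (N - h)
    rw [Nat.cast_sub hhle] at t2
    rw [← t2, Finset.range_eq_Ico]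
    refine Finset.sum_nbij' (fun k => N - k) (fun k => N - k) ?_ ?_ ?_ ?_ ?_
    · intro a ha; simp only [Finset.mem_Ico] at *; omega
    · intro a ha; simp only [Finset.mem_Ico] at *; omega
    · intro a ha; simp only [Finset.mem_Ico] at ha; show N - (N - a) = a; omega
    · intro a ha; simp only [Finset.mem_Ico] at ha; show N - (N - a) = a; omega
    · intro a ha
      simp only [Finset.mem_Ico] at ha
      have hsym : N.choose (N - a) = N.choose a := Nat.choose_symm (by omega)
      rw [hsym, abs_of_nonpos (by omega : (N : ℤ) - 2 * a ≤ 0),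
        Nat.cast_sub (by omega : a ≤ N)]
      ring
  have hk1 : ((h : ℤ) + 1) * N.choose (h + 1) = ((N : ℤ) - h) * N.choose h := key_step N h
  have hsym2 : N.choose (N - h) = N.choose h := Nat.choose_symm hhle
  rw [hsplit, h1, h2, hk1, hsym2]
  ring

theorem two_bin_expected_abs_diff (N : ℕ) :
    multExp 2 N (fun _ => 1 / 2) (fun x => |(x 1 : ℝ) - (x 0 : ℝ)|) =
      (2 : ℝ) ^ (1 - (N : ℤ)) * (((N + 1) / 2 : ℕ) : ℝ) * (N.choose (N / 2) : ℝ) := by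
  have hstep : multExp 2 N (fun _ => 1 / 2) (fun x => |(x 1 : ℝ) - (x 0 : ℝ)|) =
      ∑ k ∈ Finset.range (N + 1),
        (N.choose k : ℝ) * ((1:ℝ)/2) ^ N * |(N : ℝ) - 2 * k| := by
    unfold multExp
    refine Finset.sum_nbij' (fun x => x 0) (fun k => ![k, N - k]) ?_ ?_ ?_ ?_ ?_
    · intro x hx
      simp only [Finset.mem_filter, Fintype.mem_piFinset, Finset.mem_range,
        Fin.sum_univ_two] at hx
      simp only [Finset.mem_range]; omega
    · intro k hk
      simp only [Finset.mem_range] at hk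
      simp only [Finset.mem_filter, Fintype.mem_piFinset, Finset.mem_range,
        Fin.sum_univ_two, Matrix.cons_val_zero, Matrix.cons_val_one, Matrix.head_cons]
      constructor
      · intro i; fin_cases i <;> simp <;> omega
      · omega
    · intro x hx
      simp only [Finset.mem_filter, Fintype.mem_piFinset, Finset.mem_range,
        Fin.sum_univ_two] at hx
      funext i; fin_cases i <;> simp <;> omega
    · intro k hk; simp
    · intro x hx
      simp only [Finset.mem_filter, Fintype.mem_piFinset, Finset.mem_range,
        Fin.sum_univ_two] at hx
      obtain ⟨hb, hsum⟩ := hx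
      have huniv : (Finset.univ : Finset (Fin 2)) = {0, 1} := by decide
      have hmult : Nat.multinomial Finset.univ x = N.choose (x 0) := by
        rw [huniv, Nat.binomial_eq_choose (by decide : (0 : Fin 2) ≠ 1), hsum]
      have hprod : (∏ i, ((fun _ : Fin 2 => (1:ℝ)/2) i) ^ x i) = ((1:ℝ)/2) ^ N := by
        rw [Fin.prod_univ_two, ← pow_add, hsum]
      rw [hmult, hprod]
      have hx1 : (x 1 : ℝ) = (N : ℝ) - x 0 := by
        have : x 0 + x 1 = N := hsum
        push_cast [← this]; ring
      show (N.choose (x 0) : ℝ) * ((1:ℝ)/2) ^ N * |(x 1 : ℝ) - (x 0 : ℝ)| =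
        (N.choose (x 0) : ℝ) * ((1:ℝ)/2) ^ N * |(N : ℝ) - 2 * (x 0 : ℝ)|
      rw [hx1]
      congr 1
      ring
  rw [hstep]
  have habs := abs_sum N
  have hcast := congrArg (fun z : ℤ => (z : ℝ)) habs
  push_cast at hcast
  rw [show ((((N:ℤ))/2 : ℤ):ℝ) = ((N/2:ℕ):ℝ) from by norm_cast] at hcast
  have hpull : ∑ k ∈ Finset.range (N + 1),
      (N.choose k : ℝ) * ((1:ℝ)/2) ^ N * |(N : ℝ) - 2 * k| =
      ((1:ℝ)/2) ^ N * ∑ k ∈ Finset.range (N + 1), (N.choose k : ℝ) * |(N : ℝ) - 2 * k| := by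
    rw [Finset.mul_sum]; refine Finset.sum_congr rfl fun k _ => by ring
  rw [hpull, hcast]
  have hfloor : (((N + 1) / 2 : ℕ) : ℝ) = (N : ℝ) - ((N / 2 : ℕ) : ℝ) := by
    rw [show (N + 1) / 2 = N - N / 2 from by omega, Nat.cast_sub (Nat.div_le_self N 2)]
  have hpow : (2 : ℝ) ^ (1 - (N : ℤ)) = 2 * ((1:ℝ)/2) ^ N := by
    rw [zpow_sub₀ (two_ne_zero), zpow_one, zpow_natCast, one_div, inv_pow]
    ring
  rw [hfloor, hpow]
  ring
end

section
/- For a uniform multinomial sample of size N with n bins, the expected discrete total variation F(n,N) equals 2·(n−1)·((n−2)/n)^N · Σ_{k_1+k_2≤N, k_1<k_2} [N! / (k_1!·k_2!·(N−k_1−k_2)!)] · (n−2)^{−(k_1+k_2)} · (k_2−k_1), for n ≥ 3. -/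
/-!
Every pair of distinct bins `(x i, x j)` of a uniform multinomial sample has the same joint
law: lumping the other `n - 2` bins together and summing them out with the multinomial theorem
gives `P(k₁, k₂) = N! / (k₁! k₂! (N - k₁ - k₂)!) · n^(-(k₁ + k₂)) · ((n - 2) / n)^(N - k₁ - k₂)`.
So `F(n, N) = (n - 1) · E|x₂ - x₁|`, and as this law is symmetric in `(k₁, k₂)`, the sum of
`|k₂ - k₁|` over all pairs is twice the sum of `k₂ - k₁` over the pairs with `k₁ < k₂`.
-/

open Finset

/-- Discrete total variation of a histogram with `n + 1` bins. -/
noncomputable def dtv (n : ℕ) (x : Fin (n + 1) → ℕ) : ℝ :=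
  ∑ i : Fin n, |(x i.succ : ℝ) - (x i.castSucc : ℝ)|

open Nat

section Marginal

variable {ι K : Type*} [Fintype ι] [DecidableEq ι] {i j : ι}

@[to_additive]
theorem prod_univ_eq_mul_mul_prod_compl_pair {M : Type*} [CommMonoid M] (hij : i ≠ j)
    (f : ι → M) : ∏ l, f l = f i * f j * ∏ l ∈ ({i, j}ᶜ : Finset ι), f l := by
  rw [← prod_mul_prod_compl {i, j}, prod_pair hij]

theorem cast_multinomial_eq_trinomial_mul_multinomial_compl_pair [Field K] [CharZero K]
    (hij : i ≠ j) (x : ι → ℕ) :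
    (multinomial univ x : K) =
      (∑ l, x l)! / ((x i)! * (x j)! * (∑ l, x l - x i - x j)!) *
        multinomial ({i, j}ᶜ : Finset ι) x := by
  have hsum := sum_univ_eq_add_add_sum_compl_pair hij x
  have hrest : ∑ l, x l - x i - x j = ∑ l ∈ ({i, j}ᶜ : Finset ι), x l := by omega
  have hspec := multinomial_spec univ x
  have hspec' := multinomial_spec ({i, j}ᶜ : Finset ι) x
  rw [prod_univ_eq_mul_mul_prod_compl_pair hij] at hspec
  rw [hrest, div_mul_eq_mul_div, eq_div_iff (by simp [factorial_ne_zero]), ← hspec, ← hspec']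
  push_cast
  ring

theorem sum_multinomial_mul_prod_pow_filter_apply_pair_eq [Field K] [CharZero K] (hij : i ≠ j)
    (p : ι → K) {N k₁ k₂ : ℕ} (hk : k₁ + k₂ ≤ N) :
    ∑ x ∈ (piAntidiag univ N).filter (fun x => (x i, x j) = (k₁, k₂)),
        (multinomial univ x : K) * ∏ l, p l ^ x l =
      N ! / (k₁ ! * k₂ ! * (N - k₁ - k₂)!) * p i ^ k₁ * p j ^ k₂ *
        (∑ l ∈ ({i, j}ᶜ : Finset ι), p l) ^ (N - k₁ - k₂) := by
  rw [sum_pow_eq_sum_piAntidiag, mul_sum]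
  -- a point of the fibre is determined by its values off `{i, j}`
  refine sum_nbij' (fun x l => if l ∈ ({i, j}ᶜ : Finset ι) then x l else 0)
    (fun y l => if l = i then k₁ else if l = j then k₂ else y l) ?_ ?_ ?_ ?_ ?_
  · intro x hx
    simp only [mem_filter, mem_piAntidiag, Prod.mk.injEq] at hx ⊢
    obtain ⟨⟨hsum, -⟩, hxi, hxj⟩ := hx
    refine ⟨?_, fun l hl => by_contra fun h => hl (if_neg h)⟩
    rw [sum_univ_eq_add_add_sum_compl_pair hij] at hsum
    rw [sum_ite_mem, inter_self]
    omega
  · intro y hy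
    simp only [mem_filter, mem_piAntidiag, Prod.mk.injEq] at hy ⊢
    refine ⟨⟨?_, by simp⟩, by simp, by simp [hij.symm]⟩
    have hrest : ∑ l ∈ ({i, j}ᶜ : Finset ι),
        (if l = i then k₁ else if l = j then k₂ else y l) = ∑ l ∈ ({i, j}ᶜ : Finset ι), y l :=
      sum_congr rfl fun l hl => by grind [mem_compl]
    rw [sum_univ_eq_add_add_sum_compl_pair hij, hrest, hy.1]
    simp only [if_pos, if_neg hij.symm]
    omega
  · intro x hx
    simp only [mem_filter, mem_piAntidiag, Prod.mk.injEq] at hx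
    grind [mem_compl]
  · intro y hy
    simp only [mem_piAntidiag] at hy
    grind [mem_compl]
  · intro x hx
    simp only [mem_filter, mem_piAntidiag, Prod.mk.injEq] at hx
    obtain ⟨⟨hsum, -⟩, rfl, rfl⟩ := hx
    have hres : ∀ l ∈ ({i, j}ᶜ : Finset ι),
        (if l ∈ ({i, j}ᶜ : Finset ι) then x l else 0) = x l := fun l hl => if_pos hl
    beta_reduce
    rw [cast_multinomial_eq_trinomial_mul_multinomial_compl_pair hij,
      prod_univ_eq_mul_mul_prod_compl_pair hij, hsum, multinomial_congr hres,
      prod_congr rfl fun l hl => congrArg (p l ^ ·) (hres l hl)]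
    ring

theorem sum_multinomial_mul_prod_pow_mul_apply_pair [Field K] [CharZero K] (hij : i ≠ j)
    (p : ι → K) (N : ℕ) (g : ℕ → ℕ → K) :
    ∑ x ∈ piAntidiag univ N, (multinomial univ x : K) * (∏ l, p l ^ x l) * g (x i) (x j) =
      ∑ k ∈ (range (N + 1) ×ˢ range (N + 1)).filter (fun k => k.1 + k.2 ≤ N),
        N ! / (k.1 ! * k.2 ! * (N - k.1 - k.2)!) * p i ^ k.1 * p j ^ k.2 *
          (∑ l ∈ ({i, j}ᶜ : Finset ι), p l) ^ (N - k.1 - k.2) * g k.1 k.2 := by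
  have hmaps : ∀ x ∈ piAntidiag univ N,
      (x i, x j) ∈ (range (N + 1) ×ˢ range (N + 1)).filter (fun k => k.1 + k.2 ≤ N) := by
    intro x hx
    simp only [mem_piAntidiag] at hx
    rw [sum_univ_eq_add_add_sum_compl_pair hij] at hx
    simp only [mem_filter, mem_product, mem_range]
    omega
  rw [← sum_fiberwise_of_maps_to hmaps]
  refine sum_congr rfl fun ⟨k₁, k₂⟩ hk => ?_
  simp only [mem_filter] at hk
  rw [← sum_multinomial_mul_prod_pow_filter_apply_pair_eq hij p hk.2, sum_mul]
  refine sum_congr rfl fun x hx => ?_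
  simp only [mem_filter, Prod.mk.injEq] at hx
  rw [hx.2.1, hx.2.2]

theorem one_div_pow_mul_div_pow_sub [Field K] {n q : K} (hq : q ≠ 0) {k N : ℕ}
    (hk : k ≤ N) : (1 / n) ^ k * (q / n) ^ (N - k) = (q / n) ^ N * q ^ (-(k : ℤ)) := by
  obtain ⟨r, rfl⟩ := Nat.exists_eq_add_of_le hk
  rw [Nat.add_sub_cancel_left, pow_add, zpow_neg, zpow_natCast, div_pow, div_pow, div_pow, one_pow]
  field_simp

theorem sum_multinomial_mul_uniform_pow_mul_apply_pair [Field K] [CharZero K] (hij : i ≠ j)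
    {n : K} (hn : (Fintype.card ι : K) = n) (hn2 : n - 2 ≠ 0) (N : ℕ) (g : ℕ → ℕ → K) :
    ∑ x ∈ piAntidiag univ N, (multinomial univ x : K) * (∏ l, (1 / n) ^ x l) * g (x i) (x j) =
      ((n - 2) / n) ^ N *
        ∑ k ∈ (range (N + 1) ×ˢ range (N + 1)).filter (fun k => k.1 + k.2 ≤ N),
          N ! / (k.1 ! * k.2 ! * (N - k.1 - k.2)!) * (n - 2) ^ (-((k.1 : ℤ) + k.2)) *
            g k.1 k.2 := by
  have hrest : ∑ l ∈ ({i, j}ᶜ : Finset ι), 1 / n = (n - 2) / n := by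
    rw [sum_const, card_compl, card_pair hij, nsmul_eq_mul, Nat.cast_sub, hn]
    · simp [div_eq_mul_inv]
    · exact (card_pair hij).symm.trans_le (card_le_univ _)
  rw [sum_multinomial_mul_prod_pow_mul_apply_pair hij, hrest, mul_sum]
  refine sum_congr rfl fun k hk => ?_
  simp only [mem_filter] at hk
  rw [mul_assoc _ ((1 / n) ^ k.1), ← pow_add, mul_assoc _ ((1 / n) ^ (k.1 + k.2)), Nat.sub_sub,
    one_div_pow_mul_div_pow_sub hn2 hk.2]
  push_cast
  ring

end Marginal

theorem sum_mul_abs_sub_eq_two_mul_sum_filter_lt {R : Type*} [CommRing R] [LinearOrder R]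
    [IsStrictOrderedRing R] {s : Finset (ℕ × ℕ)} (hs : ∀ k ∈ s, k.swap ∈ s) {A : ℕ → ℕ → R}
    (hA : ∀ a b, A a b = A b a) :
    ∑ k ∈ s, A k.1 k.2 * |(k.2 : R) - k.1| =
      2 * ∑ k ∈ s.filter (fun k => k.1 < k.2), A k.1 k.2 * ((k.2 : R) - k.1) := by
  have habs : ∀ a b : ℕ, |(b : R) - a| =
      (if a < b then (b : R) - a else 0) + (if b < a then (a : R) - b else 0) := by
    intro a b
    rcases lt_trichotomy a b with h | rfl | h
    · have : (a : R) < b := by exact_mod_cast h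
      simp [h, h.not_gt, abs_of_pos (sub_pos.2 this)]
    · simp
    · have : (b : R) < a := by exact_mod_cast h
      simp [h, h.not_gt, abs_of_neg (sub_neg.2 this)]
  have hswap : ∑ k ∈ s, A k.1 k.2 * (if k.2 < k.1 then (k.1 : R) - k.2 else 0) =
      ∑ k ∈ s, A k.1 k.2 * (if k.1 < k.2 then (k.2 : R) - k.1 else 0) :=
    sum_nbij' Prod.swap Prod.swap hs hs (fun _ _ => rfl) (fun _ _ => rfl)
      (fun k _ => by rw [hA]; rfl)
  simp_rw [habs, mul_add, sum_add_distrib, hswap, ← two_mul, mul_ite, mul_zero, ← sum_filter]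

theorem multExp_eq_sum_piAntidiag (n N : ℕ) (p : Fin n → ℝ) (f : (Fin n → ℕ) → ℝ) :
    multExp n N p f =
      ∑ x ∈ piAntidiag univ N, (multinomial univ x : ℝ) * (∏ i, p i ^ x i) * f x := by
  refine sum_congr (ext fun x => ?_) fun _ _ => rfl
  simp only [mem_filter, Fintype.mem_piFinset, mem_range, mem_piAntidiag, mem_univ,
    implies_true, and_true, and_iff_right_iff_imp]
  rintro rfl i
  exact Nat.lt_succ_of_le (single_le_sum (fun _ _ => Nat.zero_le _) (mem_univ i))

/-- Theorem 2: the exact expected discrete total variation of a uniform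
multinomial histogram with `m + 3` bins (i.e. `n ≥ 3` bins). -/
theorem uniform_dtv_exact (m N : ℕ) :
    multExp (m + 3) N (fun _ => 1 / ((m : ℝ) + 3)) (dtv (m + 2)) =
      2 * ((m : ℝ) + 2) * ((((m : ℝ) + 3) - 2) / ((m : ℝ) + 3)) ^ N *
        ∑ k ∈ (Finset.range (N + 1) ×ˢ Finset.range (N + 1)).filter
            (fun k => k.1 + k.2 ≤ N ∧ k.1 < k.2),
          (N.factorial : ℝ) /
              ((k.1.factorial : ℝ) * (k.2.factorial : ℝ) *
                ((N - k.1 - k.2).factorial : ℝ)) *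
            (((m : ℝ) + 3) - 2) ^ (-((k.1 : ℤ) + (k.2 : ℤ))) *
            ((k.2 : ℝ) - (k.1 : ℝ)) := by
  have hcard : (Fintype.card (Fin (m + 3)) : ℝ) = (m : ℝ) + 3 := by simp
  have hn2 : ((m : ℝ) + 3) - 2 ≠ 0 := by ring_nf; positivity
  have hpair (i : Fin (m + 2)) := sum_multinomial_mul_uniform_pow_mul_apply_pair
    (Fin.castSucc_lt_succ (i := i)).ne hcard hn2 N (fun a b => |(b : ℝ) - a|)
  have hsymm (a b : ℕ) :
      (N ! / (a ! * b ! * (N - a - b)!) * ((m : ℝ) + 3 - 2) ^ (-((a : ℤ) + b))) =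
        N ! / (b ! * a ! * (N - b - a)!) * ((m : ℝ) + 3 - 2) ^ (-((b : ℤ) + a)) := by
    rw [Nat.sub_right_comm, add_comm (a : ℤ), mul_comm (a ! : ℝ)]
  have hswap : ∀ k ∈ (range (N + 1) ×ˢ range (N + 1)).filter (fun k => k.1 + k.2 ≤ N),
      k.swap ∈ (range (N + 1) ×ˢ range (N + 1)).filter (fun k => k.1 + k.2 ≤ N) := by
    simp only [mem_filter, mem_product, mem_range, Prod.fst_swap, Prod.snd_swap]
    omega
  rw [multExp_eq_sum_piAntidiag]
  conv_lhs => simp only [dtv, mul_sum]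
  rw [sum_comm, sum_congr rfl fun i _ => hpair i, sum_const, Finset.card_univ, Fintype.card_fin,
    nsmul_eq_mul, sum_mul_abs_sub_eq_two_mul_sum_filter_lt hswap hsymm, filter_filter]
  push_cast
  ring
end
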